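/- arXiv:2404.02954 — 5 statements merged into one kernel-verified Lean document; each statement's English description precedes it below -/
import Mathlib

section
/- Let D ≥ 1 and let M ⊆ ℝ^D be a Borel set whose closure cl(M) satisfies λ_D(cl(M)) = 0. Let ℙ† be a Borel probability measure on ℝ^D with ℙ†(M) = 1 and supp(ℙ†) = cl(M). Let (ℙ_t)_{t=1}^∞ be Borel probability measures on ℝ^D with ℙ_t ≪ λ_D, with densities p_t, such that ℙ_t converges weakly to ℙ† as t → ∞. Then liminf_{t→∞} p_t(x) = 0 for λ_D-almost every x ∈ ℝ^D ∖ cl(M). (Likelihood Instability Theorem, first part.) -/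
/-!
By the portmanteau theorem, `limsup_t ℙ_t(F) ≤ ℙ†(F) = 0` for every closed set `F` outside
`cl(M)`, so Fatou's lemma gives `∫_F liminf_t p_t ≤ liminf_t ℙ_t(F) = 0`, i.e. `liminf_t p_t = 0`
almost everywhere on `F`. The open set `ℝ^D ∖ cl(M)` is a countable union of such `F`.
-/

open MeasureTheory Filter Topology
open scoped ENNReal

/-- The support of a Borel probability measure: the intersection of all closed sets of
full measure. -/
def msupport {E : Type*} [TopologicalSpace E] [MeasurableSpace E]
    (μ : MeasureTheory.Measure E) : Set E :=
  ⋂₀ {C : Set E | IsClosed C ∧ μ C = 1}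

theorem Real.liminf_eq_zero_of_liminf_ofReal_eq_zero {ι : Type*} {l : Filter ι} {u : ι → ℝ}
    (hu : ∀ i, 0 ≤ u i) (h : liminf (fun i => ENNReal.ofReal (u i)) l = 0) :
    liminf u l = 0 := by
  have hfreq : ∀ ε > 0, ∃ᶠ i in l, u i ≤ ε := fun ε hε =>
    (frequently_lt_of_liminf_lt (by isBoundedDefault) (h ▸ ENNReal.ofReal_pos.2 hε)).mono
      fun _ hi => ((ENNReal.ofReal_lt_ofReal_iff hε).1 hi).le
  have hbdd : l.IsBoundedUnder (· ≥ ·) u := isBoundedUnder_of ⟨0, hu⟩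
  refine le_antisymm (le_of_forall_gt_imp_ge_of_dense fun ε hε => ?_) ?_
  · exact liminf_le_of_frequently_le (hfreq ε hε) hbdd
  · exact le_liminf_of_le (IsCoboundedUnder.of_frequently_le (hfreq 1 one_pos))
      (Eventually.of_forall hu)

theorem ae_liminf_eq_zero_of_liminf_lintegral_eq_zero {α : Type*} [MeasurableSpace α]
    {μ : Measure α} {f : ℕ → α → ℝ≥0∞} (hf : ∀ n, Measurable (f n))
    (h : liminf (fun n => ∫⁻ x, f n x ∂μ) atTop = 0) :
    ∀ᵐ x ∂μ, liminf (fun n => f n x) atTop = 0 := by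
  have hfatou : ∫⁻ x, liminf (fun n => f n x) atTop ∂μ = 0 :=
    nonpos_iff_eq_zero.1 (h ▸ lintegral_liminf_le hf)
  exact (lintegral_eq_zero_iff (Measurable.liminf hf)).1 hfatou

section WeakLimit

variable {X : Type*} [TopologicalSpace X] [MeasurableSpace X] [OpensMeasurableSpace X]
  [HasOuterApproxClosed X] {μ : ProbabilityMeasure X}

theorem ProbabilityMeasure.tendsto_measure_zero_of_isClosed {ι : Type*} {l : Filter ι}
    {μs : ι → ProbabilityMeasure X} (hμs : Tendsto μs l (𝓝 μ))
    {F : Set X} (hF : IsClosed F) (hμF : (μ : Measure X) F = 0) :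
    Tendsto (fun i => (μs i : Measure X) F) l (𝓝 0) :=
  tendsto_of_le_liminf_of_limsup_le zero_le
    (hμF ▸ ProbabilityMeasure.limsup_measure_closed_le_of_tendsto hμs hF)

variable {μs : ℕ → ProbabilityMeasure X} {ν : Measure X} {f : ℕ → X → ℝ≥0∞}

theorem ae_liminf_density_eq_zero_of_isClosed (hμs : Tendsto μs atTop (𝓝 μ))
    (hdens : ∀ n, (μs n : Measure X) = ν.withDensity (f n)) (hf : ∀ n, Measurable (f n))
    {F : Set X} (hF : IsClosed F) (hμF : (μ : Measure X) F = 0) :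
    ∀ᵐ x ∂ν, x ∈ F → liminf (fun n => f n x) atTop = 0 := by
  rw [← ae_restrict_iff' hF.measurableSet]
  refine ae_liminf_eq_zero_of_liminf_lintegral_eq_zero hf ?_
  have hlim := ProbabilityMeasure.tendsto_measure_zero_of_isClosed hμs hF hμF
  simp only [hdens, withDensity_apply _ hF.measurableSet] at hlim
  exact hlim.liminf_eq

theorem ae_liminf_density_eq_zero_of_isOpen [PerfectlyNormalSpace X]
    (hμs : Tendsto μs atTop (𝓝 μ))
    (hdens : ∀ n, (μs n : Measure X) = ν.withDensity (f n)) (hf : ∀ n, Measurable (f n))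
    {U : Set X} (hU : IsOpen U) (hμU : (μ : Measure X) U = 0) :
    ∀ᵐ x ∂ν, x ∈ U → liminf (fun n => f n x) atTop = 0 := by
  obtain ⟨T, hT_open, hT_countable, hUT⟩ := hU.isClosed_compl.isGδ
  have hcompl_subset : ∀ t ∈ T, tᶜ ⊆ U := fun t ht =>
    Set.compl_subset_comm.1 (hUT ▸ Set.sInter_subset_of_mem ht)
  have hpieces : ∀ t ∈ T, ∀ᵐ x ∂ν, x ∈ tᶜ → liminf (fun n => f n x) atTop = 0 := fun t ht =>
    ae_liminf_density_eq_zero_of_isClosed hμs hdens hf (hT_open t ht).isClosed_compl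
      (measure_mono_null (hcompl_subset t ht) hμU)
  filter_upwards [(ae_ball_iff hT_countable).2 hpieces] with x hx hxU
  have hx_notMem : x ∉ ⋂₀ T := hUT ▸ fun h => h hxU
  obtain ⟨t, ht, hxt⟩ : ∃ t ∈ T, x ∉ t := by simpa [Set.mem_sInter] using hx_notMem
  exact hx t ht hxt

end WeakLimit

theorem likelihood_instability_first_part_general
    {D : ℕ}
    (M : Set (EuclideanSpace ℝ (Fin D)))
    (Pdag : Measure (EuclideanSpace ℝ (Fin D))) [IsProbabilityMeasure Pdag]
    (hPdagM : Pdag M = 1)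
    (P : ℕ → Measure (EuclideanSpace ℝ (Fin D)))
    (hPprob : ∀ t, IsProbabilityMeasure (P t))
    (p : ℕ → EuclideanSpace ℝ (Fin D) → ℝ)
    (hp_nonneg : ∀ t x, 0 ≤ p t x)
    (hp_meas : ∀ t, Measurable (p t))
    (hp_density : ∀ t, ∀ A : Set (EuclideanSpace ℝ (Fin D)), MeasurableSet A →
        P t A = ∫⁻ x in A, ENNReal.ofReal (p t x) ∂volume)
    (hweak : ∀ h : BoundedContinuousFunction (EuclideanSpace ℝ (Fin D)) ℝ,
        Tendsto (fun t => ∫ x, h x ∂(P t)) atTop (𝓝 (∫ x, h x ∂Pdag))) :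
    ∀ᵐ x ∂volume, x ∉ closure M → liminf (fun t => p t x) atTop = 0 := by
  have hPdag_compl : Pdag (closure M)ᶜ = 0 :=
    (prob_compl_eq_zero_iff isClosed_closure.measurableSet).2
      (le_antisymm prob_le_one (hPdagM ▸ measure_mono subset_closure))
  let μ : ProbabilityMeasure (EuclideanSpace ℝ (Fin D)) := ⟨Pdag, inferInstance⟩
  let μs : ℕ → ProbabilityMeasure (EuclideanSpace ℝ (Fin D)) := fun t => ⟨P t, hPprob t⟩
  have hconv : Tendsto μs atTop (𝓝 μ) :=
    ProbabilityMeasure.tendsto_iff_forall_integral_tendsto.2 hweak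
  have hdens : ∀ t, P t = volume.withDensity fun x => ENNReal.ofReal (p t x) := fun t =>
    Measure.ext fun A hA => by rw [withDensity_apply _ hA, hp_density t A hA]
  filter_upwards [ae_liminf_density_eq_zero_of_isOpen hconv hdens
    (fun t => (hp_meas t).ennreal_ofReal) isClosed_closure.isOpen_compl hPdag_compl]
    with x hx hxM
  exact Real.liminf_eq_zero_of_liminf_ofReal_eq_zero (hp_nonneg · x) (hx hxM)

/-- **Likelihood Instability Theorem, first part.** If Borel probability measures `P t`
with densities `p t` with respect to Lebesgue measure converge weakly to a probability
measure `Pdag` with `Pdag M = 1` and `supp Pdag = closure M`, where `closure M` is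
Lebesgue-null, then `liminf_t p t x = 0` for Lebesgue-almost every `x` outside
`closure M`. -/
theorem likelihood_instability_first_part
    {D : ℕ} (hD : 1 ≤ D)
    (M : Set (EuclideanSpace ℝ (Fin D))) (hM : MeasurableSet M)
    (hMnull : volume (closure M) = 0)
    (Pdag : Measure (EuclideanSpace ℝ (Fin D))) [IsProbabilityMeasure Pdag]
    (hPdagM : Pdag M = 1)
    (hsupp : msupport Pdag = closure M)
    (P : ℕ → Measure (EuclideanSpace ℝ (Fin D)))
    (hPprob : ∀ t, IsProbabilityMeasure (P t))
    (hPac : ∀ t, P t ≪ volume)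
    (p : ℕ → EuclideanSpace ℝ (Fin D) → ℝ)
    (hp_nonneg : ∀ t x, 0 ≤ p t x)
    (hp_meas : ∀ t, Measurable (p t))
    (hp_density : ∀ t, ∀ A : Set (EuclideanSpace ℝ (Fin D)), MeasurableSet A →
        P t A = ∫⁻ x in A, ENNReal.ofReal (p t x) ∂volume)
    (hweak : ∀ h : BoundedContinuousFunction (EuclideanSpace ℝ (Fin D)) ℝ,
        Tendsto (fun t => ∫ x, h x ∂(P t)) atTop (𝓝 (∫ x, h x ∂Pdag))) :
    ∀ᵐ x ∂volume, x ∉ closure M → liminf (fun t => p t x) atTop = 0 :=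
  likelihood_instability_first_part_general M Pdag hPdagM P hPprob p hp_nonneg hp_meas hp_density
    hweak
end

section
/- Let D ≥ 1 and let M ⊆ ℝ^D be a Borel set whose closure cl(M) satisfies λ_D(cl(M)) = 0. Let ℙ† be a Borel probability measure on ℝ^D with ℙ†(M) = 1 and supp(ℙ†) = cl(M). Let (ℙ_t)_{t=1}^∞ be Borel probability measures on ℝ^D with ℙ_t ≪ λ_D, with densities p_t, such that ℙ_t converges weakly to ℙ† as t → ∞. Then for every x ∈ cl(M) and every ε > 0, sup_{x' ∈ B_ε(x)} p_t(x') → ∞ as t → ∞. (Likelihood Instability Theorem, second part.) -/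
/-!
Weak convergence only sees open sets from below: by the portmanteau theorem, an open set `G`
keeps at least its limiting mass `ℙ†(G)` under `ℙ_t` for large `t`. Take for `G` the
intersection of the ball `B_ε(x)` with a thin open neighbourhood of `cl(M)`. Since `x` lies
in the support, `ℙ†(G) ≥ ℙ†(B_ε(x)) > 0`, while `λ_D(G)` is as small as we like because
`cl(M)` is Lebesgue-null. As `ℙ_t(G) ≤ (sup_{B_ε(x)} p_t) · λ_D(G)`, the supremum must
eventually exceed any bound.
-/

open MeasureTheory Filter Topology
open scoped ENNReal

open Metric

lemma measure_pos_of_mem_msupport {Ω : Type*} [TopologicalSpace Ω] [MeasurableSpace Ω]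
    [OpensMeasurableSpace Ω] {μ : Measure Ω} [IsProbabilityMeasure μ] {U : Set Ω} {x : Ω}
    (hU : IsOpen U) (hx : x ∈ msupport μ) (hxU : x ∈ U) : 0 < μ U := by
  refine pos_iff_ne_zero.2 fun hU0 => ?_
  have hcompl : μ Uᶜ = 1 := (prob_compl_eq_one_iff hU.measurableSet).2 hU0
  exact hx Uᶜ ⟨hU.isClosed_compl, hcompl⟩ hxU

lemma tendsto_measure_thickening_inter_of_measure_eq_zero {α : Type*} [PseudoMetricSpace α]
    [MeasurableSpace α] [OpensMeasurableSpace α] {ν : Measure α} {C U : Set α}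
    (hC : IsClosed C) (hC0 : ν C = 0) (hU : ν U ≠ ∞) :
    Tendsto (fun δ => ν (thickening δ C ∩ U)) (𝓝[>] 0) (𝓝 0) := by
  have hfin : ∃ R > 0, ν.restrict U (thickening R C) ≠ ∞ :=
    ⟨1, one_pos, by rw [Measure.restrict_apply isOpen_thickening.measurableSet]; exact
      ne_top_of_le_ne_top hU (measure_mono Set.inter_subset_right)⟩
  have hlim := tendsto_measure_thickening_of_isClosed hfin hC
  rw [Measure.restrict_apply hC.measurableSet, measure_inter_null_of_null_left U hC0] at hlim
  exact hlim.congr fun δ => Measure.restrict_apply isOpen_thickening.measurableSet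

lemma measure_le_iSup_density_mul {α : Type*} [MeasurableSpace α] {μ ν : Measure α}
    {f : α → ℝ≥0∞} (hf : ∀ A, MeasurableSet A → μ A = ∫⁻ x in A, f x ∂ν)
    {A B : Set α} (hA : MeasurableSet A) (hAB : A ⊆ B) : μ A ≤ (⨆ x ∈ B, f x) * ν A := by
  rw [hf A hA, ← setLIntegral_const]
  exact setLIntegral_mono' hA fun x hx => le_biSup f (hAB hx)

lemma le_liminf_measure_open_of_forall_integral_tendsto {Ω ι : Type*} [MeasurableSpace Ω]
    [TopologicalSpace Ω] [OpensMeasurableSpace Ω] [HasOuterApproxClosed Ω] {L : Filter ι}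
    {μ : Measure Ω} [IsProbabilityMeasure μ] {μs : ι → Measure Ω}
    (hμs : ∀ i, IsProbabilityMeasure (μs i))
    (hlim : ∀ f : BoundedContinuousFunction Ω ℝ,
      Tendsto (fun i => ∫ ω, f ω ∂(μs i)) L (𝓝 (∫ ω, f ω ∂μ)))
    {G : Set Ω} (hG : IsOpen G) : μ G ≤ L.liminf fun i => μs i G :=
  ProbabilityMeasure.le_liminf_measure_open_of_tendsto (μ := ⟨μ, inferInstance⟩)
    (μs := fun i => ⟨μs i, hμs i⟩)
    (ProbabilityMeasure.tendsto_iff_forall_integral_tendsto.2 hlim) hG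

theorem likelihood_instability_second_part_general
    {D : ℕ}
    (M : Set (EuclideanSpace ℝ (Fin D)))
    (hMnull : volume (closure M) = 0)
    (Pdag : Measure (EuclideanSpace ℝ (Fin D))) [IsProbabilityMeasure Pdag]
    (hPdagM : Pdag M = 1)
    (hsupp : msupport Pdag = closure M)
    (P : ℕ → Measure (EuclideanSpace ℝ (Fin D)))
    (hPprob : ∀ t, IsProbabilityMeasure (P t))
    (p : ℕ → EuclideanSpace ℝ (Fin D) → ℝ)
    (hp_density : ∀ t, ∀ A : Set (EuclideanSpace ℝ (Fin D)), MeasurableSet A →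
        P t A = ∫⁻ x in A, ENNReal.ofReal (p t x) ∂volume)
    (hweak : ∀ h : BoundedContinuousFunction (EuclideanSpace ℝ (Fin D)) ℝ,
        Tendsto (fun t => ∫ x, h x ∂(P t)) atTop (𝓝 (∫ x, h x ∂Pdag))) :
    ∀ x ∈ closure M, ∀ ε : ℝ, 0 < ε →
      Tendsto (fun t => ⨆ x' ∈ Metric.ball x ε, ENNReal.ofReal (p t x'))
        atTop (𝓝 (⊤ : ℝ≥0∞)) := by
  intro x hx ε hε
  have hball_pos : 0 < Pdag (ball x ε) :=
    measure_pos_of_mem_msupport isOpen_ball (hsupp ▸ hx) (mem_ball_self hε)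
  have hclosure_conull : Pdag (closure M)ᶜ = 0 :=
    (prob_compl_eq_zero_iff isClosed_closure.measurableSet).2 <|
      le_antisymm prob_le_one (hPdagM ▸ measure_mono subset_closure)
  rw [ENNReal.tendsto_nhds_top_iff_nat]
  intro n
  have hvol_small := tendsto_measure_thickening_inter_of_measure_eq_zero isClosed_closure
    hMnull (measure_ball_lt_top (x := x) (r := ε)).ne
  have hsmall := ENNReal.Tendsto.const_mul (a := n) hvol_small (Or.inr (by simp))
  rw [mul_zero] at hsmall
  obtain ⟨δ, hvol, hδ⟩ :=
    ((hsmall.eventually_lt_const hball_pos).and self_mem_nhdsWithin).exists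
  set G := thickening δ (closure M) ∩ ball x ε
  have hG_open : IsOpen G := isOpen_thickening.inter isOpen_ball
  have hball_le : Pdag (ball x ε) ≤ Pdag G := by
    rw [← measure_inter_conull hclosure_conull, Set.inter_comm]
    exact measure_mono (Set.inter_subset_inter_left _ (self_subset_thickening hδ _))
  have hlim := le_liminf_measure_open_of_forall_integral_tendsto hPprob hweak hG_open
  filter_upwards [eventually_lt_of_lt_liminf ((hvol.trans_le hball_le).trans_le hlim)] with t ht
  have hdensity := measure_le_iSup_density_mul (hp_density t) hG_open.measurableSet
    Set.inter_subset_right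
  exact lt_of_mul_lt_mul_right (ht.trans_le hdensity) zero_le

/-- **Likelihood Instability Theorem, second part.** If Borel probability measures `P t`
with densities `p t` with respect to Lebesgue measure converge weakly to a probability
measure `Pdag` with `Pdag M = 1` and `supp Pdag = closure M`, where `closure M` is
Lebesgue-null, then for every `x ∈ closure M` and every `ε > 0`, the supremum of
`p t` over the ball `B ε x` tends to infinity as `t → ∞`. -/
theorem likelihood_instability_second_part
    {D : ℕ} (hD : 1 ≤ D)
    (M : Set (EuclideanSpace ℝ (Fin D))) (hM : MeasurableSet M)
    (hMnull : volume (closure M) = 0)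
    (Pdag : Measure (EuclideanSpace ℝ (Fin D))) [IsProbabilityMeasure Pdag]
    (hPdagM : Pdag M = 1)
    (hsupp : msupport Pdag = closure M)
    (P : ℕ → Measure (EuclideanSpace ℝ (Fin D)))
    (hPprob : ∀ t, IsProbabilityMeasure (P t))
    (hPac : ∀ t, P t ≪ volume)
    (p : ℕ → EuclideanSpace ℝ (Fin D) → ℝ)
    (hp_nonneg : ∀ t x, 0 ≤ p t x)
    (hp_meas : ∀ t, Measurable (p t))
    (hp_density : ∀ t, ∀ A : Set (EuclideanSpace ℝ (Fin D)), MeasurableSet A →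
        P t A = ∫⁻ x in A, ENNReal.ofReal (p t x) ∂volume)
    (hweak : ∀ h : BoundedContinuousFunction (EuclideanSpace ℝ (Fin D)) ℝ,
        Tendsto (fun t => ∫ x, h x ∂(P t)) atTop (𝓝 (∫ x, h x ∂Pdag))) :
    ∀ x ∈ closure M, ∀ ε : ℝ, 0 < ε →
      Tendsto (fun t => ⨆ x' ∈ Metric.ball x ε, ENNReal.ofReal (p t x'))
        atTop (𝓝 (⊤ : ℝ≥0∞)) :=
  likelihood_instability_second_part_general M hMnull Pdag hPdagM hsupp P hPprob p hp_density hweak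
end

section
/- Let D ≥ 1 and let M ⊆ ℝ^D be a Borel set whose closure cl(M) satisfies λ_D(cl(M)) = 0. Let ℙ† be a Borel probability measure on ℝ^D with ℙ†(M) = 1 and supp(ℙ†) = cl(M). Let (ℙ_t)_{t=1}^∞ be Borel probability measures on ℝ^D with ℙ_t ≪ λ_D, with densities p_t, such that ℙ_t converges weakly to ℙ† as t → ∞. Then for λ_D-almost every x ∈ ℝ^D ∖ cl(M) the following holds: if the sequence (p_t(x))_{t=1}^∞ converges to some limit L ∈ [0,∞), then L = 0. (Corollary of the Likelihood Instability Theorem: whenever the pointwise limit of the densities exists off the closure of M, it must be zero almost everywhere.) -/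
open MeasureTheory Filter Topology
open scoped ENNReal

theorem ae_liminf_eq_zero_of_tendsto_lintegral_zero {α : Type*} [MeasurableSpace α]
    {μ : Measure α} {f : ℕ → α → ℝ≥0∞} (hf : ∀ t, Measurable (f t))
    (h : Tendsto (fun t => ∫⁻ x, f t x ∂μ) atTop (𝓝 0)) :
    ∀ᵐ x ∂μ, liminf (fun t => f t x) atTop = 0 := by
  have hzero : ∫⁻ x, liminf (fun t => f t x) atTop ∂μ = 0 :=
    le_antisymm ((lintegral_liminf_le hf).trans h.liminf_eq.le) zero_le
  exact (lintegral_eq_zero_iff (Measurable.liminf hf)).mp hzero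

namespace MeasureTheory.ProbabilityMeasure

theorem tendsto_measure_zero_of_isClosed_of_measure_eq_zero
    {Ω ι : Type*} [MeasurableSpace Ω] [TopologicalSpace Ω] [OpensMeasurableSpace Ω]
    [HasOuterApproxClosed Ω] {L : Filter ι} {ν : ProbabilityMeasure Ω}
    {νs : ι → ProbabilityMeasure Ω} (hν : Tendsto νs L (𝓝 ν)) {F : Set Ω} (hF : IsClosed F)
    (hνF : (ν : Measure Ω) F = 0) :
    Tendsto (fun i => (νs i : Measure Ω) F) L (𝓝 0) :=
  tendsto_of_le_liminf_of_limsup_le zero_le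
    (hνF ▸ ProbabilityMeasure.limsup_measure_closed_le_of_tendsto hν hF)

theorem ae_liminf_density_eq_zero_of_isOpen_of_measure_eq_zero
    {E : Type*} [PseudoEMetricSpace E] [MeasurableSpace E] [OpensMeasurableSpace E]
    {μ : Measure E} {ν : ProbabilityMeasure E} {νs : ℕ → ProbabilityMeasure E}
    (hν : Tendsto νs atTop (𝓝 ν)) {f : ℕ → E → ℝ≥0∞} (hf : ∀ t, Measurable (f t))
    (hdens : ∀ t, (νs t : Measure E) = μ.withDensity (f t))
    {U : Set E} (hU : IsOpen U) (hνU : (ν : Measure E) U = 0) :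
    ∀ᵐ x ∂μ, x ∈ U → liminf (fun t => f t x) atTop = 0 := by
  obtain ⟨F, hF_closed, hF_sub, hF_union, -⟩ := hU.exists_iUnion_isClosed
  have hF : ∀ n, ∀ᵐ x ∂μ, x ∈ F n → liminf (fun t => f t x) atTop = 0 := fun n => by
    have hmass := tendsto_measure_zero_of_isClosed_of_measure_eq_zero hν (hF_closed n)
      (measure_mono_null (hF_sub n) hνU)
    simp only [hdens, withDensity_apply _ (hF_closed n).measurableSet] at hmass
    exact (ae_restrict_iff' (hF_closed n).measurableSet).mp
      (ae_liminf_eq_zero_of_tendsto_lintegral_zero hf hmass)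
  filter_upwards [ae_all_iff.mpr hF] with x hx hxU
  obtain ⟨n, hxF⟩ := Set.mem_iUnion.mp (hF_union ▸ hxU)
  exact hx n hxF

end MeasureTheory.ProbabilityMeasure

theorem likelihood_instability_corollary_general
    {D : ℕ}
    (M : Set (EuclideanSpace ℝ (Fin D)))
    (Pdag : Measure (EuclideanSpace ℝ (Fin D))) [IsProbabilityMeasure Pdag]
    (hPdagM : Pdag M = 1)
    (P : ℕ → Measure (EuclideanSpace ℝ (Fin D)))
    (hPprob : ∀ t, IsProbabilityMeasure (P t))
    (p : ℕ → EuclideanSpace ℝ (Fin D) → ℝ)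
    (hp_meas : ∀ t, Measurable (p t))
    (hp_density : ∀ t, ∀ A : Set (EuclideanSpace ℝ (Fin D)), MeasurableSet A →
        P t A = ∫⁻ x in A, ENNReal.ofReal (p t x) ∂volume)
    (hweak : ∀ h : BoundedContinuousFunction (EuclideanSpace ℝ (Fin D)) ℝ,
        Tendsto (fun t => ∫ x, h x ∂(P t)) atTop (𝓝 (∫ x, h x ∂Pdag))) :
    ∀ᵐ x ∂volume, x ∉ closure M →
      ∀ L : ℝ, 0 ≤ L → Tendsto (fun t => p t x) atTop (𝓝 L) → L = 0 := by
  let νs (t : ℕ) : ProbabilityMeasure (EuclideanSpace ℝ (Fin D)) := ⟨P t, hPprob t⟩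
  let ν : ProbabilityMeasure (EuclideanSpace ℝ (Fin D)) := ⟨Pdag, inferInstance⟩
  have hconv : Tendsto νs atTop (𝓝 ν) :=
    ProbabilityMeasure.tendsto_iff_forall_integral_tendsto.mpr hweak
  have hdens : ∀ t, P t = volume.withDensity (fun x => ENNReal.ofReal (p t x)) := fun t =>
    Measure.ext fun A hA => by rw [hp_density t A hA, withDensity_apply _ hA]
  have hPdag_compl : Pdag (closure M)ᶜ = 0 :=
    (prob_compl_eq_zero_iff isClosed_closure.measurableSet).mpr
      (le_antisymm prob_le_one (hPdagM ▸ measure_mono subset_closure))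
  filter_upwards [ProbabilityMeasure.ae_liminf_density_eq_zero_of_isOpen_of_measure_eq_zero
    hconv (fun t => (hp_meas t).ennreal_ofReal) hdens isClosed_closure.isOpen_compl
    hPdag_compl] with x hx hxM L hL hlim
  have hliminf := ((ENNReal.continuous_ofReal.tendsto L).comp hlim).liminf_eq
  rw [Function.comp_def, hx hxM, eq_comm, ENNReal.ofReal_eq_zero] at hliminf
  exact le_antisymm hliminf hL

/-- **Corollary of the Likelihood Instability Theorem.** Under the hypotheses of the
Likelihood Instability Theorem, for Lebesgue-almost every `x` outside `closure M`,
whenever the sequence `p t x` converges to some limit `L ∈ [0, ∞)`, that limit must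
be zero. -/
theorem likelihood_instability_corollary
    {D : ℕ} (hD : 1 ≤ D)
    (M : Set (EuclideanSpace ℝ (Fin D))) (hM : MeasurableSet M)
    (hMnull : volume (closure M) = 0)
    (Pdag : Measure (EuclideanSpace ℝ (Fin D))) [IsProbabilityMeasure Pdag]
    (hPdagM : Pdag M = 1)
    (hsupp : msupport Pdag = closure M)
    (P : ℕ → Measure (EuclideanSpace ℝ (Fin D)))
    (hPprob : ∀ t, IsProbabilityMeasure (P t))
    (hPac : ∀ t, P t ≪ volume)
    (p : ℕ → EuclideanSpace ℝ (Fin D) → ℝ)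
    (hp_nonneg : ∀ t x, 0 ≤ p t x)
    (hp_meas : ∀ t, Measurable (p t))
    (hp_density : ∀ t, ∀ A : Set (EuclideanSpace ℝ (Fin D)), MeasurableSet A →
        P t A = ∫⁻ x in A, ENNReal.ofReal (p t x) ∂volume)
    (hweak : ∀ h : BoundedContinuousFunction (EuclideanSpace ℝ (Fin D)) ℝ,
        Tendsto (fun t => ∫ x, h x ∂(P t)) atTop (𝓝 (∫ x, h x ∂Pdag))) :
    ∀ᵐ x ∂volume, x ∉ closure M →
      ∀ L : ℝ, 0 ≤ L → Tendsto (fun t => p t x) atTop (𝓝 L) → L = 0 :=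
  likelihood_instability_corollary_general M Pdag hPdagM P hPprob p hp_meas hp_density hweak
end

section
/- Let M ⊆ ℝ^D be a Borel set, let ℙ† be a Borel probability measure on ℝ^D with ℙ†(M) = 1, and let (ℙ_t)_{t=1}^∞ be Borel probability measures on ℝ^D with ℙ_t ≪ λ_D and densities p_t, converging weakly to ℙ†. Let x ∈ ℝ^D and ε > 0 be such that ℙ†(∂B_ε(x)) = 0. Then for every δ > 0, with M_δ the open δ-thickening of M, the inequality ℙ†(B_ε(x)) ≤ λ_D(M_δ ∩ B_ε(x)) · liminf_{t→∞} sup_{x' ∈ B_ε(x)} p_t(x') holds in [0, ∞] (with the convention 0 · ∞ = 0). -/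
/-!
The ball `B` is open, and the open thickening `T = M_δ` carries all the mass of `ℙ†`, so `T ∩ B`
is an open set with `ℙ†(B) = ℙ†(T ∩ B)`. The portmanteau theorem bounds this by
`liminf ℙ_t(T ∩ B)`, and each `ℙ_t(T ∩ B) = ∫_{T ∩ B} p_t` is at most `λ(T ∩ B) · sup_B p_t`.
Since `λ(T ∩ B) ≤ λ(B) < ∞`, the constant factor comes out of the `liminf`.
-/

open MeasureTheory Filter Topology Metric Set
open scoped ENNReal

theorem ProbabilityMeasure.le_liminf_measure_inter_of_tendsto_of_measure_eq_one
    {Ω ι : Type*} {L : Filter ι} [MeasurableSpace Ω] [TopologicalSpace Ω]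
    [OpensMeasurableSpace Ω] [HasOuterApproxClosed Ω]
    {μ : ProbabilityMeasure Ω} {μs : ι → ProbabilityMeasure Ω} (hlim : Tendsto μs L (𝓝 μ))
    {G U : Set Ω} (hG : IsOpen G) (hU : IsOpen U) (hμU : (μ : Measure Ω) U = 1) :
    (μ : Measure Ω) G ≤ L.liminf fun i ↦ (μs i : Measure Ω) (U ∩ G) := by
  have hUc : (μ : Measure Ω) Uᶜ = 0 := (prob_compl_eq_zero_iff hU.measurableSet).2 hμU
  calc (μ : Measure Ω) G = (μ : Measure Ω) (U ∩ G) := by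
        rw [inter_comm, measure_inter_conull hUc]
    _ ≤ _ := ProbabilityMeasure.le_liminf_measure_open_of_tendsto hlim (hU.inter hG)

theorem setLIntegral_le_measure_mul_iSup {α : Type*} [MeasurableSpace α] {μ : Measure α}
    {f : α → ℝ≥0∞} {A S : Set α} (hAS : A ⊆ S) :
    ∫⁻ y in A, f y ∂μ ≤ μ A * ⨆ y ∈ S, f y :=
  calc ∫⁻ y in A, f y ∂μ ≤ ∫⁻ _ in A, ⨆ y ∈ S, f y ∂μ :=
        setLIntegral_mono measurable_const fun y hy ↦ le_biSup f (hAS hy)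
    _ = μ A * ⨆ y ∈ S, f y := by rw [setLIntegral_const, mul_comm]

theorem key_wasserstein_inequality_general
    {D : ℕ}
    (M : Set (EuclideanSpace ℝ (Fin D)))
    (Pdag : Measure (EuclideanSpace ℝ (Fin D))) [IsProbabilityMeasure Pdag]
    (hPdagM : Pdag M = 1)
    (P : ℕ → Measure (EuclideanSpace ℝ (Fin D)))
    (hPprob : ∀ t, IsProbabilityMeasure (P t))
    (p : ℕ → EuclideanSpace ℝ (Fin D) → ℝ)
    (hp_density : ∀ t, ∀ A : Set (EuclideanSpace ℝ (Fin D)), MeasurableSet A →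
        P t A = ∫⁻ x in A, ENNReal.ofReal (p t x) ∂volume)
    (hweak : ∀ h : BoundedContinuousFunction (EuclideanSpace ℝ (Fin D)) ℝ,
        Tendsto (fun t => ∫ x, h x ∂(P t)) atTop (𝓝 (∫ x, h x ∂Pdag)))
    (x : EuclideanSpace ℝ (Fin D)) (ε : ℝ) :
    ∀ δ : ℝ, 0 < δ →
      Pdag (Metric.ball x ε) ≤
        volume (Metric.thickening δ M ∩ Metric.ball x ε) *
          liminf (fun t => ⨆ x' ∈ Metric.ball x ε, ENNReal.ofReal (p t x')) atTop := by
  intro δ hδ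
  set T := thickening δ M
  let μs : ℕ → ProbabilityMeasure (EuclideanSpace ℝ (Fin D)) := fun t ↦ ⟨P t, hPprob t⟩
  let μ : ProbabilityMeasure (EuclideanSpace ℝ (Fin D)) := ⟨Pdag, inferInstance⟩
  have hlim : Tendsto μs atTop (𝓝 μ) :=
    ProbabilityMeasure.tendsto_iff_forall_integral_tendsto.mpr hweak
  have hT : Pdag T = 1 :=
    le_antisymm prob_le_one (hPdagM ▸ measure_mono (self_subset_thickening hδ M))
  have hTB_finite : volume (T ∩ ball x ε) ≠ ∞ :=
    ((measure_mono inter_subset_right).trans_lt measure_ball_lt_top).ne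
  calc Pdag (ball x ε) ≤ liminf (fun t ↦ P t (T ∩ ball x ε)) atTop :=
        ProbabilityMeasure.le_liminf_measure_inter_of_tendsto_of_measure_eq_one hlim
          isOpen_ball isOpen_thickening hT
    _ ≤ liminf (fun t ↦ volume (T ∩ ball x ε) *
          ⨆ x' ∈ ball x ε, ENNReal.ofReal (p t x')) atTop := by
        refine liminf_le_liminf (Eventually.of_forall fun t ↦ ?_)
        rw [hp_density t _ (isOpen_thickening.inter isOpen_ball).measurableSet]
        exact setLIntegral_le_measure_mul_iSup inter_subset_right
    _ = _ := ENNReal.liminf_const_mul_of_ne_top hTB_finite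

/-- Key inequality in the proof of the Likelihood Instability Theorem: if `P t` are
Borel probability measures with densities `p t` converging weakly to `Pdag` with
`Pdag M = 1`, and `B ε x` is a continuity set of `Pdag`, then for every `δ > 0`,
`Pdag (ball x ε) ≤ volume (thickening δ M ∩ ball x ε) * liminf_t sup_{B ε x} p t`,
the inequality being in `[0, ∞]` (with the convention `0 * ∞ = 0`). -/
theorem key_wasserstein_inequality
    {D : ℕ} (hD : 1 ≤ D)
    (M : Set (EuclideanSpace ℝ (Fin D))) (hM : MeasurableSet M)
    (Pdag : Measure (EuclideanSpace ℝ (Fin D))) [IsProbabilityMeasure Pdag]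
    (hPdagM : Pdag M = 1)
    (P : ℕ → Measure (EuclideanSpace ℝ (Fin D)))
    (hPprob : ∀ t, IsProbabilityMeasure (P t))
    (hPac : ∀ t, P t ≪ volume)
    (p : ℕ → EuclideanSpace ℝ (Fin D) → ℝ)
    (hp_nonneg : ∀ t x, 0 ≤ p t x)
    (hp_meas : ∀ t, Measurable (p t))
    (hp_density : ∀ t, ∀ A : Set (EuclideanSpace ℝ (Fin D)), MeasurableSet A →
        P t A = ∫⁻ x in A, ENNReal.ofReal (p t x) ∂volume)
    (hweak : ∀ h : BoundedContinuousFunction (EuclideanSpace ℝ (Fin D)) ℝ,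
        Tendsto (fun t => ∫ x, h x ∂(P t)) atTop (𝓝 (∫ x, h x ∂Pdag)))
    (x : EuclideanSpace ℝ (Fin D)) (ε : ℝ) (hε : 0 < ε)
    (hcont : Pdag (frontier (Metric.ball x ε)) = 0) :
    ∀ δ : ℝ, 0 < δ →
      Pdag (Metric.ball x ε) ≤
        volume (Metric.thickening δ M ∩ Metric.ball x ε) *
          liminf (fun t => ⨆ x' ∈ Metric.ball x ε, ENNReal.ofReal (p t x')) atTop :=
  key_wasserstein_inequality_general M Pdag hPdagM P hPprob p hp_density hweak x ε
end

section
/- Let μ be a Borel probability measure on ℝ^D, let g : ℝ^d → ℝ^D be Borel measurable, and let c : ℝ^D × ℝ^D → ℝ be Borel measurable such that there exists C > 0 with sup_{(x,y) ∈ ℝ^D × ℝ^D} |c(x,y)| < C. Then the infimum over all Borel measurable functions f : ℝ^D → ℝ^d of ∫ c(x, g(f(x))) dμ(x) equals the infimum over all continuous functions f : ℝ^D → ℝ^d of ∫ c(x, g(f(x))) dμ(x). -/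
open MeasureTheory Filter Topology Metric Set
open scoped ENNReal BoundedContinuousFunction

/-! Every continuous map is measurable, so only `⨅ continuous ≤ ⨅ measurable` needs an argument.
By Lusin's theorem a measurable `f` agrees with a continuous `f'` off a set of measure `≤ δ`, and
as the cost is bounded by `C` the two integrals then differ by at most `2 C δ`.

Lusin's theorem is proved by composing `f` with a homeomorphism onto the unit ball, so that it
becomes bounded and hence integrable; continuous functions approximating it in `L¹` have a
subsequence converging a.e., Egorov's theorem and inner regularity by closed sets give a closed
set of almost full measure on which the convergence is uniform, and Tietze's theorem extends the
restriction of `f` to that set. -/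

universe u

namespace MeasureTheory

theorem norm_integral_sub_integral_le {α E : Type*} [MeasurableSpace α]
    [NormedAddCommGroup E] [NormedSpace ℝ E] {μ : Measure α} {u v : α → E}
    (hu : Integrable u μ) (hv : Integrable v μ) {s : Set α} (hs : μ s < ∞) {B : ℝ}
    (heq : ∀ x ∉ s, u x = v x) (hB : ∀ x ∈ s, ‖u x - v x‖ ≤ B) :
    ‖∫ x, u x ∂μ - ∫ x, v x ∂μ‖ ≤ B * μ.real s := by
  rw [← integral_sub hu hv,
    ← setIntegral_eq_integral_of_forall_compl_eq_zero fun x hx => sub_eq_zero.2 (heq x hx)]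
  exact norm_setIntegral_le_of_norm_le_const hs hB

variable {X : Type u} [PseudoMetricSpace X] [MeasurableSpace X] [BorelSpace X]
  {μ : Measure X} [IsFiniteMeasure μ]
  {E : Type*} [NormedAddCommGroup E] [NormedSpace ℝ E] [SecondCountableTopology E]

theorem Integrable.exists_seq_continuous_tendsto_ae {F : X → E} (hF : Integrable F μ) :
    ∃ G : ℕ → X → E, (∀ n, Continuous (G n)) ∧
      ∀ᵐ x ∂μ, Tendsto (fun n => G n x) atTop (𝓝 (F x)) := by
  have happrox (n : ℕ) :
      ∃ G : X →ᵇ E, ∫⁻ x, ‖F x - G x‖ₑ ∂μ ≤ (n : ℝ≥0∞)⁻¹ ∧ Integrable G μ :=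
    hF.exists_boundedContinuous_lintegral_sub_le
      (ENNReal.inv_ne_zero.2 (ENNReal.natCast_ne_top n))
  choose G hGF _ using happrox
  have hL1 : Tendsto (fun n => eLpNorm ((G n : X → E) - F) 1 μ) atTop (𝓝 0) := by
    refine tendsto_of_tendsto_of_tendsto_of_le_of_le tendsto_const_nhds
      ENNReal.tendsto_inv_nat_nhds_zero (fun _ => zero_le) fun n => ?_
    rw [eLpNorm_sub_comm, eLpNorm_one_eq_lintegral_enorm]
    exact hGF n
  obtain ⟨ns, -, hae⟩ := (tendstoInMeasure_of_tendsto_eLpNorm one_ne_zero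
    (fun n => (G n).continuous.aestronglyMeasurable) hF.aestronglyMeasurable
    hL1).exists_seq_tendsto_ae
  exact ⟨fun n => G (ns n), fun n => (G (ns n)).continuous, hae⟩

theorem Integrable.exists_isClosed_measure_compl_le_continuousOn {F : X → E}
    (hF : Integrable F μ) (hFm : StronglyMeasurable F) {δ : ℝ} (hδ : 0 < δ) :
    ∃ K, IsClosed K ∧ μ Kᶜ ≤ ENNReal.ofReal δ ∧ ContinuousOn F K := by
  obtain ⟨G, hG, hGF⟩ := hF.exists_seq_continuous_tendsto_ae
  obtain ⟨t, htm, htμ, hunif⟩ := tendstoUniformlyOn_of_ae_tendsto'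
    (fun n => (hG n).stronglyMeasurable) hFm hGF (half_pos hδ)
  obtain ⟨K, hKt, hK, hKμ⟩ := htm.compl.exists_isClosed_sdiff_lt (measure_ne_top μ _)
    (ENNReal.ofReal_pos.2 (half_pos hδ)).ne'
  refine ⟨K, hK, ?_, (hunif.mono hKt).continuousOn
    (Frequently.of_forall fun n => (hG n).continuousOn)⟩
  calc μ Kᶜ ≤ μ (t ∪ tᶜ \ K) := measure_mono fun x hx => (em (x ∈ t)).imp id (⟨·, hx⟩)
    _ ≤ μ t + μ (tᶜ \ K) := measure_union_le _ _
    _ ≤ ENNReal.ofReal (δ / 2) + ENNReal.ofReal (δ / 2) := add_le_add htμ hKμ.le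
    _ = ENNReal.ofReal δ := by
      rw [← ENNReal.ofReal_add (half_pos hδ).le (half_pos hδ).le, add_halves]

variable [MeasurableSpace E] [BorelSpace E]

theorem _root_.Measurable.exists_isClosed_measure_compl_le_continuousOn {f : X → E}
    (hf : Measurable f) {δ : ℝ} (hδ : 0 < δ) :
    ∃ K, IsClosed K ∧ μ Kᶜ ≤ ENNReal.ofReal δ ∧ ContinuousOn f K := by
  let T : E ≃ₜ ball (0 : E) 1 := Homeomorph.unitBall
  have hTf : Measurable (fun x => (T (f x) : E)) :=
    (continuous_subtype_val.comp T.continuous).measurable.comp hf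
  have hTf_int : Integrable (fun x => (T (f x) : E)) μ :=
    .of_bound hTf.aestronglyMeasurable 1
      (Eventually.of_forall fun x => (mem_ball_zero_iff.1 (T (f x)).2).le)
  obtain ⟨K, hK, hKμ, hcont⟩ :=
    hTf_int.exists_isClosed_measure_compl_le_continuousOn hTf.stronglyMeasurable hδ
  refine ⟨K, hK, hKμ, ?_⟩
  have hTf_cont : ContinuousOn (fun x => T (f x)) K :=
    IsInducing.subtypeVal.continuousOn_iff.2 hcont
  exact (T.symm.continuous.comp_continuousOn hTf_cont).congr fun x _ =>
    (T.symm_apply_apply _).symm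

theorem _root_.Measurable.exists_continuous_measure_ne_le [TietzeExtension.{u} E] {f : X → E}
    (hf : Measurable f) {δ : ℝ} (hδ : 0 < δ) :
    ∃ f' : X → E, Continuous f' ∧ μ {x | f' x ≠ f x} ≤ ENNReal.ofReal δ := by
  obtain ⟨K, hK, hKμ, hcont⟩ := hf.exists_isClosed_measure_compl_le_continuousOn (μ := μ) hδ
  obtain ⟨f', hf'⟩ := ContinuousMap.exists_restrict_eq hK ⟨K.domRestrict f, hcont.domRestrict⟩
  have hsub : {x | f' x ≠ f x} ⊆ Kᶜ := fun x hx hxK => hx congr($hf' ⟨x, hxK⟩)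
  exact ⟨f', f'.continuous, (measure_mono hsub).trans hKμ⟩

theorem exists_continuous_integral_le_add [TietzeExtension.{u} E]
    {h : X × E → ℝ} (hh : Measurable h) {C : ℝ} (hC : 0 < C) (hbound : ∀ z, |h z| ≤ C)
    {f : X → E} (hf : Measurable f) {ε : ℝ} (hε : 0 < ε) :
    ∃ f' : X → E, Continuous f' ∧ ∫ x, h (x, f' x) ∂μ ≤ ∫ x, h (x, f x) ∂μ + ε := by
  have hint {k : X → E} (hk : Measurable k) : Integrable (fun x => h (x, k x)) μ :=
    .of_bound (hh.comp (measurable_id.prodMk hk)).aestronglyMeasurable C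
      (Eventually.of_forall fun x => hbound _)
  obtain ⟨f', hf', hf'f⟩ :=
    hf.exists_continuous_measure_ne_le (μ := μ) (by positivity : 0 < ε / (2 * C))
  have hdiff := norm_integral_sub_integral_le (hint hf'.measurable) (hint hf)
    (hf'f.trans_lt ENNReal.ofReal_lt_top) (B := 2 * C) (fun x hx => by rw [not_not.1 hx])
    fun x _ => by
      rw [Real.norm_eq_abs]
      linarith [abs_sub (h (x, f' x)) (h (x, f x)), hbound (x, f' x), hbound (x, f x)]
  rw [Real.norm_eq_abs] at hdiff
  have hs : μ.real {x | f' x ≠ f x} ≤ ε / (2 * C) :=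
    ENNReal.toReal_le_of_le_ofReal (by positivity) hf'f
  refine ⟨f', hf', ?_⟩
  calc ∫ x, h (x, f' x) ∂μ ≤ ∫ x, h (x, f x) ∂μ + 2 * C * μ.real {x | f' x ≠ f x} := by
        linarith [le_abs_self (∫ x, h (x, f' x) ∂μ - ∫ x, h (x, f x) ∂μ)]
    _ ≤ ∫ x, h (x, f x) ∂μ + 2 * C * (ε / (2 * C)) := by gcongr
    _ = ∫ x, h (x, f x) ∂μ + ε := by rw [mul_div_cancel₀ _ (by positivity)]

end MeasureTheory

theorem ciInf_subtype_eq_of_forall_exists_le_add {α : Type*} {p q : α → Prop} (φ : α → ℝ)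
    (hqp : ∀ a, q a → p a) {B : ℝ} (hB : ∀ a, p a → B ≤ φ a)
    (happrox : ∀ a, p a → ∀ ε > 0, ∃ b, q b ∧ φ b ≤ φ a + ε) :
    ⨅ a : {a // p a}, φ a = ⨅ b : {b // q b}, φ b := by
  rcases isEmpty_or_nonempty {a // p a} with hp | hp
  · have : IsEmpty {b // q b} := ⟨fun b => hp.elim ⟨b, hqp _ b.2⟩⟩
    simp only [Real.iInf_of_isEmpty]
  have : Nonempty {b // q b} :=
    let ⟨a, ha⟩ := hp.some
    let ⟨b, hb, _⟩ := happrox a ha 1 one_pos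
    ⟨⟨b, hb⟩⟩
  have hbdd {r : α → Prop} (hr : ∀ a, r a → p a) : BddBelow (range fun a : {a // r a} => φ a) :=
    ⟨B, forall_mem_range.2 fun a => hB a (hr a a.2)⟩
  refine le_antisymm (le_ciInf fun b => ciInf_le (hbdd fun _ => id) ⟨b, hqp b b.2⟩)
    (le_ciInf fun a => le_of_forall_pos_le_add fun ε hε => ?_)
  obtain ⟨b, hb, hba⟩ := happrox a a.2 ε hε
  exact (ciInf_le (hbdd hqp) ⟨b, hb⟩).trans hba

theorem inf_over_measurable_eq_inf_over_continuous_general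
    {D d : ℕ}
    (μ : Measure (EuclideanSpace ℝ (Fin D))) [IsProbabilityMeasure μ]
    (g : EuclideanSpace ℝ (Fin d) → EuclideanSpace ℝ (Fin D)) (hg : Measurable g)
    (c : EuclideanSpace ℝ (Fin D) × EuclideanSpace ℝ (Fin D) → ℝ) (hc : Measurable c)
    (C : ℝ) (hC : 0 < C)
    (hbound : ∀ z : EuclideanSpace ℝ (Fin D) × EuclideanSpace ℝ (Fin D), |c z| < C) :
    (⨅ f : {f : EuclideanSpace ℝ (Fin D) → EuclideanSpace ℝ (Fin d) // Measurable f},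
        ∫ x, c (x, g (f.1 x)) ∂μ)
      = ⨅ f : {f : EuclideanSpace ℝ (Fin D) → EuclideanSpace ℝ (Fin d) // Continuous f},
        ∫ x, c (x, g (f.1 x)) ∂μ := by
  refine ciInf_subtype_eq_of_forall_exists_le_add (p := Measurable) (q := Continuous)
    (fun f => ∫ x, c (x, g (f x)) ∂μ) (fun _ hf => hf.measurable) (B := -C)
    (fun f _ => neg_le_of_abs_le ?_) fun f hf ε hε => ?_
  · simpa using norm_integral_le_of_norm_le_const (μ := μ) (f := fun x => c (x, g (f x)))
      (Eventually.of_forall fun x => (hbound (x, g (f x))).le)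
  · exact exists_continuous_integral_le_add (h := fun z => c (z.1, g z.2))
      (hc.comp (measurable_fst.prodMk (hg.comp measurable_snd))) hC (fun _ => (hbound _).le)
      hf hε

/-- For a Borel probability measure `μ` on `ℝ^D`, a Borel measurable `g : ℝ^d → ℝ^D`,
and a bounded Borel measurable cost `c : ℝ^D × ℝ^D → ℝ`, the infimum of
`∫ c (x, g (f x)) dμ` over all Borel measurable `f : ℝ^D → ℝ^d` equals the infimum over
all continuous `f : ℝ^D → ℝ^d`. -/
theorem inf_over_measurable_eq_inf_over_continuous
    {D d : ℕ} (hD : 1 ≤ D) (hd : 1 ≤ d)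
    (μ : Measure (EuclideanSpace ℝ (Fin D))) [IsProbabilityMeasure μ]
    (g : EuclideanSpace ℝ (Fin d) → EuclideanSpace ℝ (Fin D)) (hg : Measurable g)
    (c : EuclideanSpace ℝ (Fin D) × EuclideanSpace ℝ (Fin D) → ℝ) (hc : Measurable c)
    (C : ℝ) (hC : 0 < C)
    (hbound : ∀ z : EuclideanSpace ℝ (Fin D) × EuclideanSpace ℝ (Fin D), |c z| < C) :
    (⨅ f : {f : EuclideanSpace ℝ (Fin D) → EuclideanSpace ℝ (Fin d) // Measurable f},
        ∫ x, c (x, g (f.1 x)) ∂μ)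
      = ⨅ f : {f : EuclideanSpace ℝ (Fin D) → EuclideanSpace ℝ (Fin d) // Continuous f},
        ∫ x, c (x, g (f.1 x)) ∂μ :=
  inf_over_measurable_eq_inf_over_continuous_general μ g hg c hc C hC hbound
end
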